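/- arXiv:1002.4435 — 2 statements merged into one kernel-verified Lean document; each statement's English description precedes it below -/
import Mathlib

section
/- Let G = (V,A) be a connected simple directed graph on vertices V = {1,…,n}, K an algebraically closed field whose characteristic does not divide n, and ω ∈ K a primitive n-th root of unity. Let H_G ⊆ K[x_1,…,x_n] be the Hamiltonian ideal generated by {x_i^n − 1 : i ∈ V} ∪ {∏_{j∈δ⁺(i)}(ω x_i − x_j) : i ∈ V}, and for each Hamiltonian cycle permutation σ of G let I_σ ⊆ K[x_1,…,x_n] be the cycle ideal generated by {x_v^n − 1 : v ∈ V} ∪ {x_{σ(v)} − ω x_v : v ∈ V}. Then the variety of H_G is the union of the varieties of the cycle ideals: {x ∈ K^n : f(x) = 0 ∀ f ∈ H_G} = ⋃_σ {x ∈ K^n : f(x) = 0 ∀ f ∈ I_σ}, where the union runs over all Hamiltonian cycle permutations σ of G. -/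
/-!
A common zero `x` of the Hamiltonian ideal has coordinates that are `n`-th roots of unity, and
every vertex `i` has an out-neighbour `j` with `x j = ω * x i`. Following such neighbours from a
vertex `v` produces the `n` distinct values `ω ^ k * x v`, `k < n`, so `x` is injective on the `n`
vertices. Hence the out-neighbour is unique, `i ↦ j` is a permutation `σ` with `x ∘ σ = ω • x`,
and its powers reach every vertex: `σ` is a Hamiltonian cycle and `x` lies on its cycle variety.
The converse inclusion is immediate, `σ i` being the out-neighbour of `i` that kills the product.
-/

open MvPolynomial

/-- The Hamiltonian ideal of a directed graph on `Fin n` with arc relation `A`. -/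
noncomputable def hamIdeal (n : ℕ) (A : Fin n → Fin n → Prop) [DecidableRel A]
    {K : Type*} [Field K] (ω : K) : Ideal (MvPolynomial (Fin n) K) :=
  Ideal.span ({p | ∃ i : Fin n, p = X i ^ n - 1} ∪
    {p | ∃ i : Fin n,
      p = ∏ j ∈ Finset.univ.filter (fun j => A i j), (C ω * X i - X j)})

/-- The cycle ideal of the Hamiltonian cycle given by the permutation `σ`. -/
noncomputable def cycleIdeal (n : ℕ) (σ : Equiv.Perm (Fin n))
    {K : Type*} [Field K] (ω : K) : Ideal (MvPolynomial (Fin n) K) :=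
  Ideal.span ({p | ∃ v : Fin n, p = X v ^ n - 1} ∪
    {p | ∃ v : Fin n, p = X (σ v) - C ω * X v})

/-- A Hamiltonian cycle permutation: a single `n`-cycle whose successor arcs
all lie in the digraph. -/
def IsHamCyclePerm (n : ℕ) (A : Fin n → Fin n → Prop) (σ : Equiv.Perm (Fin n)) : Prop :=
  σ.IsCycle ∧ σ.support = Finset.univ ∧ ∀ v, A v (σ v)

theorem forall_mem_span_map_eq_zero_iff {R S : Type*} [Semiring R] [Semiring S]
    (φ : R →+* S) (s : Set R) : (∀ f ∈ Ideal.span s, φ f = 0) ↔ ∀ p ∈ s, φ p = 0 := by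
  simpa only [SetLike.le_def, Set.subset_def, SetLike.mem_coe, RingHom.mem_ker] using
    Ideal.span_le (I := RingHom.ker φ) (s := s)

section Variety

variable {n : ℕ} {K : Type*} [Field K] {ω : K} {x : Fin n → K}

theorem forall_mem_hamIdeal_eval_eq_zero_iff (A : Fin n → Fin n → Prop) [DecidableRel A] :
    (∀ f ∈ hamIdeal n A ω, eval x f = 0) ↔
      (∀ i, x i ^ n = 1) ∧ ∀ i, ∃ j, A i j ∧ x j = ω * x i := by
  rw [hamIdeal, forall_mem_span_map_eq_zero_iff]
  simp [or_imp, forall_and, Finset.prod_eq_zero_iff, sub_eq_zero, eq_comm (a := ω * _)]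

theorem forall_mem_cycleIdeal_eval_eq_zero_iff (σ : Equiv.Perm (Fin n)) :
    (∀ f ∈ cycleIdeal n σ ω, eval x f = 0) ↔
      (∀ v, x v ^ n = 1) ∧ ∀ v, x (σ v) = ω * x v := by
  rw [cycleIdeal, forall_mem_span_map_eq_zero_iff]
  simp [or_imp, forall_and, sub_eq_zero]

end Variety

theorem Equiv.Perm.apply_pow_eq_pow_mul {ι M : Type*} [Monoid M] {ω : M} {x : ι → M}
    {σ : Equiv.Perm ι} (hσ : ∀ v, x (σ v) = ω * x v)
    (k : ℕ) (v : ι) : x ((σ ^ k) v) = ω ^ k * x v := by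
  rw [Equiv.Perm.coe_pow, ← mul_left_iterate_apply]
  exact Function.Semiconj.iterate_right (f := x) (fun v => hσ v) k v

section Orbit

variable {ι M : Type*} [Fintype ι] [CommMonoidWithZero M] [IsCancelMulZero M] {n : ℕ} {ω : M}

theorem IsPrimitiveRoot.injective_pow_mul (hω : IsPrimitiveRoot ω n) {a : M} (ha : a ≠ 0) :
    Function.Injective fun k : Fin n => ω ^ (k : ℕ) * a :=
  fun k l h => Fin.ext <| hω.pow_inj k.isLt l.isLt <| mul_right_cancel₀ ha h

variable {x : ι → M}

theorem IsPrimitiveRoot.exists_equiv_pow_mul (hω : IsPrimitiveRoot ω n)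
    (hcard : Fintype.card ι = n) (hstep : ∀ i, ∃ j, x j = ω * x i) {v : ι} (hv : x v ≠ 0) :
    ∃ g : Fin n ≃ ι, ∀ k : Fin n, x (g k) = ω ^ (k : ℕ) * x v := by
  have hreach : ∀ k : ℕ, ∃ j, x j = ω ^ k * x v := by
    intro k
    induction k with
    | zero => exact ⟨v, by simp⟩
    | succ k ih =>
      obtain ⟨j, hj⟩ := ih
      obtain ⟨j', hj'⟩ := hstep j
      exact ⟨j', by rw [hj', hj, pow_succ', mul_assoc]⟩
  choose g hg using fun k : Fin n => hreach k
  have hinj : Function.Injective g := fun k l h => hω.injective_pow_mul hv <| by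
    simp only [← hg, h]
  exact ⟨.ofBijective g ((Fintype.bijective_iff_injective_and_card g).mpr ⟨hinj, by simp [hcard]⟩),
    hg⟩

theorem IsPrimitiveRoot.exists_isCycle_of_forall_exists_mul [DecidableEq ι] [Nonempty ι]
    (hω : IsPrimitiveRoot ω n) (hcard : Fintype.card ι = n) (hx : ∀ i, x i ≠ 0)
    (R : ι → ι → Prop) (hirr : ∀ i, ¬ R i i) (hstep : ∀ i, ∃ j, R i j ∧ x j = ω * x i) :
    ∃ σ : Equiv.Perm ι, σ.IsCycle ∧ σ.support = Finset.univ ∧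
      (∀ v, R v (σ v)) ∧ ∀ v, x (σ v) = ω * x v := by
  obtain ⟨v⟩ := ‹Nonempty ι›
  obtain ⟨g, hg⟩ := hω.exists_equiv_pow_mul hcard (fun i => (hstep i).imp fun _ => And.right)
    (hx v)
  have hxinj : Function.Injective x := by
    have : Function.Injective (x ∘ g) := by
      simpa only [Function.comp_def, hg] using hω.injective_pow_mul (hx v)
    simpa using this.comp g.symm.injective
  have hωu : IsUnit ω := hω.isUnit (hcard ▸ Fintype.card_ne_zero (α := ι))
  choose s hsR hsx using hstep
  have hsinj : Function.Injective s := fun i j h =>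
    hxinj <| hωu.mul_left_cancel <| by rw [← hsx, ← hsx, h]
  set σ : Equiv.Perm ι := .ofBijective s (Finite.injective_iff_bijective.mp hsinj)
  have hfix : ∀ w, σ w ≠ w := fun w h => hirr w <| by
    simpa only [show s w = w from h] using hsR w
  have hsame : ∀ w, σ.SameCycle v w := by
    intro w
    obtain ⟨k, rfl⟩ := g.surjective w
    have : (σ ^ (k : ℕ)) v = g k := hxinj <| by
      rw [hg, Equiv.Perm.apply_pow_eq_pow_mul (σ := σ) hsx]
    exact this ▸ Equiv.Perm.sameCycle_pow_right.mpr (Equiv.Perm.SameCycle.refl σ v)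
  exact ⟨σ, ⟨v, hfix v, fun w _ => hsame w⟩,
    Finset.eq_univ_of_forall fun w => Equiv.Perm.mem_support.mpr (hfix w), hsR, hsx⟩

end Orbit

theorem stmt_9_general (n : ℕ) (A : Fin n → Fin n → Prop) [DecidableRel A]
    (hirr : ∀ i, ¬ A i i) (hconn : (SimpleGraph.fromRel A).Connected)
    (K : Type*) [Field K]
    (ω : K) (hω : IsPrimitiveRoot ω n) :
    {x : Fin n → K | ∀ f ∈ hamIdeal n A ω, MvPolynomial.eval x f = 0} =
      ⋃ (σ : Equiv.Perm (Fin n)) (_ : IsHamCyclePerm n A σ),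
        {x : Fin n → K | ∀ f ∈ cycleIdeal n σ ω, MvPolynomial.eval x f = 0} := by
  have := hconn.nonempty
  have hn : n ≠ 0 := Fin.pos_iff_nonempty.mpr this |>.ne'
  ext x
  simp only [Set.mem_iUnion, exists_prop, forall_mem_hamIdeal_eval_eq_zero_iff,
    forall_mem_cycleIdeal_eval_eq_zero_iff]
  constructor
  · rintro ⟨hroot, hstep⟩
    obtain ⟨σ, hcyc, hsupp, hA, hσx⟩ := hω.exists_isCycle_of_forall_exists_mul
      (Fintype.card_fin n) (fun i => ne_zero_pow hn (by simp [hroot i])) A hirr hstep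
    exact ⟨σ, ⟨hcyc, hsupp, hA⟩, hroot, hσx⟩
  · rintro ⟨σ, ⟨-, -, hA⟩, hroot, hσx⟩
    exact ⟨hroot, fun i => ⟨σ i, hA i, hσx i⟩⟩

theorem stmt_9 (n : ℕ) (A : Fin n → Fin n → Prop) [DecidableRel A]
    (hirr : ∀ i, ¬ A i i) (hconn : (SimpleGraph.fromRel A).Connected)
    (K : Type*) [Field K] [IsAlgClosed K] (hchar : (n : K) ≠ 0)
    (ω : K) (hω : IsPrimitiveRoot ω n) :
    {x : Fin n → K | ∀ f ∈ hamIdeal n A ω, MvPolynomial.eval x f = 0} =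
      ⋃ (σ : Equiv.Perm (Fin n)) (_ : IsHamCyclePerm n A σ),
        {x : Fin n → K | ∀ f ∈ cycleIdeal n σ ω, MvPolynomial.eval x f = 0} :=
  stmt_9_general n A hirr hconn K ω hω
end

section
/- Let G = (V,A) be a connected simple directed graph on vertices V = {1,…,n}, K an algebraically closed field whose characteristic does not divide n, and ω ∈ K a primitive n-th root of unity. Let H_G ⊆ K[x_1,…,x_n] be the Hamiltonian ideal generated by {x_i^n − 1 : i ∈ V} ∪ {∏_{j∈δ⁺(i)}(ω x_i − x_j) : i ∈ V}, and for a Hamiltonian cycle permutation σ let I_σ be the cycle ideal generated by {x_v^n − 1 : v ∈ V} ∪ {x_{σ(v)} − ω x_v : v ∈ V}. Then G has exactly one Hamiltonian cycle permutation if and only if there exists a Hamiltonian cycle permutation σ of G with H_G = I_σ. -/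
open MvPolynomial

/-!
A point of the zero locus of `H_G` labels the vertices by `n`-th roots of unity so that every
vertex `v` has an out-neighbour labelled `ω * x v`. The set of labels is closed under
multiplication by `ω`, so it has `n` elements and the labels are pairwise distinct; hence the
successor map is a permutation, and since `ω` is primitive it is a single `n`-cycle: a Hamiltonian
cycle `σ` with `x` in the zero locus of `I_σ`. Conversely every Hamiltonian cycle carries such a
labelling, which determines the cycle. So `V(H_G)` is the union of the `V(I_σ)`. Since `n` is
invertible, `H_G ⊇ (x_i ^ n - 1)` is radical, and the Nullstellensatz turns `V(H_G) = V(I_σ)`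
into `H_G = I_σ`.
-/

namespace MvPolynomial

variable {σ K : Type*} [Field K]

/-- `MvPolynomial σ K ⧸ I` is a quotient of the group algebra of `(ZMod m)^σ`, which is
semisimple by Maschke's theorem, hence reduced. -/
theorem isRadical_of_X_pow_sub_one_mem [Fintype σ] {m : ℕ} (hm : (m : K) ≠ 0)
    {I : Ideal (MvPolynomial σ K)} (hI : ∀ i, X i ^ m - 1 ∈ I) : I.IsRadical := by
  classical
  have : NeZero m := ⟨by rintro rfl; exact hm Nat.cast_zero⟩
  rw [Ideal.isRadical_iff_quotient_reduced]
  let y : σ → MvPolynomial σ K ⧸ I := fun i => Ideal.Quotient.mk I (X i)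
  have hy (i : σ) : y i ^ m = 1 := by
    rw [← sub_eq_zero, ← map_pow, ← map_one (Ideal.Quotient.mk I), ← map_sub]
    exact Ideal.Quotient.eq_zero_iff_mem.mpr (hI i)
  let χ : Multiplicative (σ → ZMod m) →* MvPolynomial σ K ⧸ I :=
    { toFun := fun g => ∏ i, y i ^ (g.toAdd i).val
      map_one' := by simp
      map_mul' := fun a b => by
        simp only [toAdd_mul, Pi.add_apply, ← Finset.prod_mul_distrib, ← pow_add]
        refine Finset.prod_congr rfl fun i _ => ?_
        rw [ZMod.val_add, ← pow_eq_pow_mod _ (hy i)] }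
  let F := AddMonoidAlgebra.lift K (MvPolynomial σ K ⧸ I) (σ → ZMod m) χ
  let φ : MvPolynomial σ K →ₐ[K] AddMonoidAlgebra K (σ → ZMod m) :=
    aeval fun i => AddMonoidAlgebra.of K (σ → ZMod m) (.ofAdd (Pi.single i 1))
  have hFφ : F.comp φ = Ideal.Quotient.mkₐ K I := by
    refine algHom_ext fun i => ?_
    have hsingle : ∏ j, y j ^ (Pi.single (M := fun _ => ZMod m) i 1 j).val = y i := by
      rw [Fintype.prod_eq_single i fun j hj => by simp [Pi.single_eq_of_ne hj],
        Pi.single_eq_same, ZMod.val_one_eq_one_mod, ← pow_eq_pow_mod _ (hy i), pow_one]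
    simpa [F, φ, χ] using hsingle
  have hF : Function.Surjective F := fun q => by
    obtain ⟨p, rfl⟩ := Ideal.Quotient.mkₐ_surjective K I q
    exact ⟨φ p, by rw [← hFφ]; rfl⟩
  have : NeZero (Nat.card (σ → ZMod m) : K) :=
    ⟨by simpa [Nat.card_eq_fintype_card] using pow_ne_zero _ hm⟩
  have := F.toRingHom.isSemisimpleRing_of_surjective hF
  infer_instance

theorem le_of_zeroLocus_subset [IsAlgClosed K] [Finite σ]
    {I J : Ideal (MvPolynomial σ K)} (hJ : J.IsRadical) (h : zeroLocus K J ⊆ zeroLocus K I) :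
    I ≤ J :=
  calc I ≤ vanishingIdeal K (zeroLocus K I) := le_vanishingIdeal_zeroLocus I
    _ ≤ vanishingIdeal K (zeroLocus K J) := vanishingIdeal_anti_mono h
    _ = J := by rw [vanishingIdeal_zeroLocus_eq_radical, hJ.radical]

end MvPolynomial

section CyclicLabelling

open Equiv Finset

variable {α K : Type*} [Fintype α] [Field K] {n : ℕ} {ω : K}

theorem injective_of_forall_exists_eq_mul (hcard : Fintype.card α = n)
    (hω : IsPrimitiveRoot ω n) {x : α → K} (hx : ∀ v, x v ≠ 0)
    (hmul : ∀ v, ∃ w, x w = ω * x v) : Function.Injective x := by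
  classical
  rcases isEmpty_or_nonempty α with hα | ⟨⟨v₀⟩⟩
  · exact Function.injective_of_subsingleton x
  have horbit (k : ℕ) : ω ^ k * x v₀ ∈ univ.image x := by
    induction k with
    | zero => simp
    | succ k ih =>
      obtain ⟨w, -, hw⟩ := mem_image.1 ih
      obtain ⟨w', hw'⟩ := hmul w
      exact mem_image.2 ⟨w', mem_univ _, by rw [hw', hw, pow_succ', mul_assoc]⟩
  have horbit_card : ((range n).image fun k => ω ^ k * x v₀).card = n := by
    rw [card_image_of_injOn, card_range]
    exact fun i hi j hj hij =>
      hω.pow_inj (mem_range.1 hi) (mem_range.1 hj) (mul_right_cancel₀ (hx v₀) hij)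
  have hcard_image : (univ.image x).card = (univ : Finset α).card := by
    refine le_antisymm card_image_le ?_
    rw [card_univ, hcard, ← horbit_card]
    exact card_le_card fun _ h => by
      obtain ⟨k, -, rfl⟩ := mem_image.1 h
      exact horbit k
  simpa using card_image_iff.1 hcard_image

theorem isCycle_and_support_eq_univ_of_apply_eq_mul [DecidableEq α]
    (hcard : Fintype.card α = n) (hn : 1 < n) (hω : IsPrimitiveRoot ω n) {τ : Perm α}
    {x : α → K} (hinj : Function.Injective x) (hroot : ∀ v, x v ^ n = 1)
    (hτ : ∀ v, x (τ v) = ω * x v) :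
    τ.IsCycle ∧ τ.support = univ := by
  have : NeZero n := ⟨by omega⟩
  have hx0 (v : α) : x v ≠ 0 := (IsUnit.of_pow_eq_one (hroot v) (NeZero.ne n)).ne_zero
  have hpow (k : ℕ) (v : α) : x ((τ ^ k) v) = ω ^ k * x v := by
    induction k with
    | zero => simp
    | succ k ih => rw [pow_succ', Perm.mul_apply, hτ, ih, ← mul_assoc, ← pow_succ']
  have hne (v : α) : τ v ≠ v := fun h =>
    hω.ne_one hn (mul_right_cancel₀ (hx0 v) (by rw [← hτ, h, one_mul]))
  have hsame (v w : α) : τ.SameCycle v w := by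
    obtain ⟨k, -, hk⟩ := hω.eq_pow_of_pow_eq_one (ξ := x w / x v) (by
      rw [div_pow, hroot, hroot, div_one])
    exact ⟨k, hinj (by rw [zpow_natCast, hpow, hk, div_mul_cancel₀ _ (hx0 v)])⟩
  obtain ⟨v₀⟩ : Nonempty α := Fintype.card_pos_iff.1 (by omega)
  exact ⟨⟨v₀, hne v₀, fun w _ => hsame v₀ w⟩,
    eq_univ_of_forall fun v => Perm.mem_support.2 (hne v)⟩

theorem Equiv.Perm.IsCycle.exists_injective_apply_eq_mul [DecidableEq α] {τ : Perm α}
    (hτ : τ.IsCycle) (hsupp : τ.support = univ) (hcard : Fintype.card α = n)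
    (hω : IsPrimitiveRoot ω n) :
    ∃ x : α → K, Function.Injective x ∧ (∀ v, x v ^ n = 1) ∧
      ∀ v, x (τ v) = ω * x v := by
  have hmoved (v : α) : τ v ≠ v := Perm.mem_support.1 (hsupp ▸ mem_univ v)
  obtain ⟨v₀, -⟩ := id hτ
  -- label `(τ ^ k) v₀` by `ω ^ k`; this is well defined as `τ` and `ω` both have order `n`
  choose k hk using fun w => hτ.exists_pow_eq (hmoved v₀) (hmoved w)
  have hn : n ≠ 0 := by rw [← hcard]; exact (Fintype.card_pos_iff.2 ⟨v₀⟩).ne'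
  have horder : orderOf τ = orderOf ω := by
    rw [hτ.orderOf, hsupp, card_univ, hcard, hω.eq_orderOf]
  have hpow_iff (a b : ℕ) : (τ ^ a) v₀ = (τ ^ b) v₀ ↔ ω ^ a = ω ^ b := by
    rw [(hω.isOfFinOrder hn).pow_eq_pow_iff_modEq, ← horder, ← pow_eq_pow_iff_modEq]
    exact ⟨fun h => hτ.pow_eq_pow_iff.2 ⟨v₀, hmoved v₀, h⟩, fun h => by rw [h]⟩
  refine ⟨fun w => ω ^ k w, fun w w' h => ?_, fun w => ?_, fun w => ?_⟩
  · rw [← hk w, ← hk w']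
    exact (hpow_iff _ _).2 h
  · rw [← pow_mul, mul_comm, pow_mul, hω.pow_eq_one, one_pow]
  · rw [← pow_succ', ← hpow_iff, hk, pow_succ', Perm.mul_apply, hk]

end CyclicLabelling

theorem IsHamCyclePerm.one_lt {n : ℕ} {A : Fin n → Fin n → Prop} {σ : Equiv.Perm (Fin n)}
    (hσ : IsHamCyclePerm n A σ) : 1 < n := by
  have := hσ.1.two_le_card_support
  rwa [hσ.2.1, Finset.card_univ, Fintype.card_fin] at this

section HamiltonianIdeal

variable {n : ℕ} {A : Fin n → Fin n → Prop} [DecidableRel A] {K : Type*} [Field K] {ω : K}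

theorem hamIdeal_le_cycleIdeal {σ : Equiv.Perm (Fin n)} (hσ : ∀ v, A v (σ v)) :
    hamIdeal n A ω ≤ cycleIdeal n σ ω := by
  rw [hamIdeal, Ideal.span_le]
  rintro p (⟨i, rfl⟩ | ⟨i, rfl⟩)
  · exact Ideal.subset_span (Or.inl ⟨i, rfl⟩)
  · have hσi : σ i ∈ Finset.univ.filter (A i) := by simp [hσ i]
    have hfactor : C ω * X i - X (σ i) ∈ cycleIdeal n σ ω := by
      rw [← neg_sub]
      exact neg_mem (Ideal.subset_span (Or.inr ⟨i, rfl⟩))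
    rw [← Finset.mul_prod_erase _ _ hσi]
    exact Ideal.mul_mem_right _ _ hfactor

theorem mem_zeroLocus_cycleIdeal {σ : Equiv.Perm (Fin n)} {x : Fin n → K} :
    x ∈ zeroLocus K (cycleIdeal n σ ω) ↔
      (∀ v, x v ^ n = 1) ∧ ∀ v, x (σ v) = ω * x v := by
  rw [cycleIdeal, zeroLocus_span]
  simp [sub_eq_zero, or_imp, forall_and]

theorem mem_zeroLocus_hamIdeal {x : Fin n → K} :
    x ∈ zeroLocus K (hamIdeal n A ω) ↔
      (∀ v, x v ^ n = 1) ∧ ∀ v, ∃ w, A v w ∧ x w = ω * x v := by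
  rw [hamIdeal, zeroLocus_span]
  simp [sub_eq_zero, or_imp, forall_and, Finset.prod_eq_zero_iff, eq_comm (a := ω * _)]

theorem mem_zeroLocus_hamIdeal_iff_exists (hn : 1 < n) (hω : IsPrimitiveRoot ω n)
    {x : Fin n → K} :
    x ∈ zeroLocus K (hamIdeal n A ω) ↔
      ∃ σ, IsHamCyclePerm n A σ ∧ x ∈ zeroLocus K (cycleIdeal n σ ω) := by
  refine ⟨fun hx => ?_, fun ⟨σ, hσ, hx⟩ =>
    zeroLocus_anti_mono (hamIdeal_le_cycleIdeal hσ.2.2) hx⟩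
  obtain ⟨hroot, hsucc⟩ := mem_zeroLocus_hamIdeal.1 hx
  choose f hfA hfx using hsucc
  have hx0 (v : Fin n) : x v ≠ 0 := (IsUnit.of_pow_eq_one (hroot v) (by omega)).ne_zero
  have hinj : Function.Injective x :=
    injective_of_forall_exists_eq_mul (Fintype.card_fin n) hω hx0 fun v => ⟨f v, hfx v⟩
  have hf : Function.Injective f := fun v w h =>
    hinj (mul_left_cancel₀ (hω.ne_zero (by omega)) (by rw [← hfx, ← hfx, h]))
  let σ := Equiv.ofBijective f hf.bijective_of_finite
  obtain ⟨hcycle, hsupp⟩ :=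
    isCycle_and_support_eq_univ_of_apply_eq_mul (Fintype.card_fin n) hn hω (τ := σ) hinj hroot
      hfx
  exact ⟨σ, ⟨hcycle, hsupp, hfA⟩, mem_zeroLocus_cycleIdeal.2 ⟨hroot, hfx⟩⟩

end HamiltonianIdeal

theorem stmt_11_general (n : ℕ) (A : Fin n → Fin n → Prop) [DecidableRel A]
    (K : Type*) [Field K] [IsAlgClosed K] (hchar : (n : K) ≠ 0)
    (ω : K) (hω : IsPrimitiveRoot ω n) :
    (∃! σ : Equiv.Perm (Fin n), IsHamCyclePerm n A σ) ↔
      (∃ σ : Equiv.Perm (Fin n), IsHamCyclePerm n A σ ∧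
        hamIdeal n A ω = cycleIdeal n σ ω) := by
  constructor
  · rintro ⟨σ, hσ, huniq⟩
    refine ⟨σ, hσ, le_antisymm (hamIdeal_le_cycleIdeal hσ.2.2) ?_⟩
    refine le_of_zeroLocus_subset (isRadical_of_X_pow_sub_one_mem hchar
      fun i => Ideal.subset_span (Or.inl ⟨i, rfl⟩)) fun x hx => ?_
    obtain ⟨τ, hτ, hxτ⟩ := (mem_zeroLocus_hamIdeal_iff_exists hσ.one_lt hω).1 hx
    rwa [← huniq τ hτ]
  · rintro ⟨σ, hσ, hσH⟩
    refine ⟨σ, hσ, fun τ hτ => ?_⟩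
    obtain ⟨x, hinj, hroot, hxτ⟩ :=
      hτ.1.exists_injective_apply_eq_mul hτ.2.1 (Fintype.card_fin n) hω
    have hxσ : x ∈ zeroLocus K (cycleIdeal n σ ω) :=
      hσH ▸ zeroLocus_anti_mono (hamIdeal_le_cycleIdeal hτ.2.2)
        (mem_zeroLocus_cycleIdeal.2 ⟨hroot, hxτ⟩)
    exact Equiv.ext fun v => hinj (by rw [hxτ, (mem_zeroLocus_cycleIdeal.1 hxσ).2])

theorem stmt_11 (n : ℕ) (A : Fin n → Fin n → Prop) [DecidableRel A]
    (hirr : ∀ i, ¬ A i i) (hconn : (SimpleGraph.fromRel A).Connected)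
    (K : Type*) [Field K] [IsAlgClosed K] (hchar : (n : K) ≠ 0)
    (ω : K) (hω : IsPrimitiveRoot ω n) :
    (∃! σ : Equiv.Perm (Fin n), IsHamCyclePerm n A σ) ↔
      (∃ σ : Equiv.Perm (Fin n), IsHamCyclePerm n A σ ∧
        hamIdeal n A ω = cycleIdeal n σ ω) :=
  stmt_11_general n A K hchar ω hω
end
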